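/- arXiv:1904.12329 — 3 statements merged into one kernel-verified Lean document; each statement's English description precedes it below -/
import Mathlib

section
/- With T well-founded and all components P_t well-founded, the ranked sum order <_R on the disjoint union ⋃_t P_t is well-founded. -/
open Ordinal

section RankedSum

variable {T : Type*} [PartialOrder T] {P : T → Type*} [∀ t, PartialOrder (P t)]
  [∀ t, WellFoundedLT (P t)]

/-- The primitive rank of an element of the disjoint union: its ordinal rank
inside its own component. -/
noncomputable def primRank (a : Σ t, P t) : Ordinal :=
  IsWellFounded.rank (α := P a.1) (· < ·) a.2

/-- The ranked sum (strict) order on the disjoint union of the family `P`. -/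
def RankedLT (a b : Σ t, P t) : Prop :=
  (∃ h : a.1 = b.1, (h ▸ a.2) < b.2) ∨ (a.1 < b.1 ∧ primRank a ≤ primRank b)

/-- The reflexive closure of the ranked sum order. -/
def RankedLE (a b : Σ t, P t) : Prop :=
  RankedLT a b ∨ a = b

variable [WellFoundedLT T]

theorem rankedLT_wf : WellFounded (RankedLT (T := T) (P := P)) := by
  have hsub : Subrelation (RankedLT (T := T) (P := P))
      (InvImage (Prod.Lex (· < ·) (· < ·))
        (fun a => (IsWellFounded.rank (α := T) (· < ·) a.1, primRank a))) := by
    rintro ⟨s, x⟩ ⟨t, y⟩ (⟨h, hlt⟩ | ⟨h, _⟩)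
    · dsimp at h
      subst h
      exact Prod.Lex.right _ (IsWellFounded.rank_lt_of_rel hlt)
    · exact Prod.Lex.left _ _ (IsWellFounded.rank_lt_of_rel h)
  exact Subrelation.wf hsub
    (InvImage.wf _ (WellFounded.prod_lex wellFounded_lt wellFounded_lt))

instance : IsWellFounded (Σ t, P t) RankedLT := ⟨rankedLT_wf⟩

/-- The rank of an element of the ranked sum. -/
noncomputable def rankedRank (a : Σ t, P t) : Ordinal :=
  IsWellFounded.rank (RankedLT (T := T) (P := P)) a

end RankedSum

theorem rankedLT_wellFounded {T : Type*} [PartialOrder T] [WellFoundedLT T]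
    {P : T → Type*} [∀ t, PartialOrder (P t)] [∀ t, WellFoundedLT (P t)] :
    WellFounded (RankedLT (T := T) (P := P)) := by
  exact rankedLT_wf
end

section
/- There exist a well-founded partial order T, a family of well-founded partial orders (P_t)_{t∈T}, and an element a of the ranked sum P = RP such that rank_P(a) > rank_T(f(a)) + rank_{P_{f(a)}}(a). Concretely, with T = {0,1} (0 < 1) and P_0 = P_1 = ω + 1, the maximum element a of P_1 satisfies rank_P(a) = ω + 1 > ω = rank_T(f(a)) + rank_{P_1}(a). -/
open Ordinal

/-! The element `⟨1, ω⟩` lies above `⟨0, ω⟩` in the ranked sum, and the latter already has rank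
`ω` because its component embeds into the sum; hence `⟨1, ω⟩` has rank at least `ω + 1`, whereas
`rank_T 1 + ω = 1 + ω = ω`. The matching upper bound holds because, over a base of finite height,
`primRank a + rank_T a.1` strictly increases along the ranked order: adding a finite ordinal on
the right is strictly monotone. -/

universe u v w

open IsWellFounded

theorem IsWellFounded.lift_rank_le_of_rel_imp_lt {α : Type u} {r : α → α → Prop}
    [IsWellFounded α r] (g : α → Ordinal.{max u w}) (hg : ∀ ⦃a b⦄, r a b → g a < g b)
    (a : α) : lift.{w} (rank r a) ≤ g a := by
  induction a using IsWellFounded.induction r with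
  | _ a IH =>
    refine le_of_forall_lt fun z hz => ?_
    obtain ⟨o, ho, rfl⟩ := lt_lift_iff.mp hz
    rw [rank_eq, Ordinal.lt_iSup_iff] at ho
    obtain ⟨⟨b, hba⟩, hob⟩ := ho
    calc lift.{w} o ≤ lift.{w} (rank r b) := lift_le.mpr (Order.lt_succ_iff.mp hob)
      _ ≤ g b := IH b hba
      _ < g a := hg hba

theorem Ordinal.add_natCast_lt_add_natCast {a b : Ordinal} (h : a < b) (n : ℕ) :
    a + n < b + n :=
  calc a + n < a + n + 1 := lt_add_one _
    _ = a + 1 + n := by rw [add_assoc, Nat.cast_add_one_comm, add_assoc]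
    _ ≤ b + n := add_le_add_left (Order.add_one_le_of_lt h) _

theorem Ordinal.rank_Iic (c : Ordinal.{u}) (x : Set.Iic c) :
    rank (· < ·) x = lift.{u + 1} x.1 := by
  rw [rank_eq_typein, ← typein_ordinal, ← typein_apply (Set.initialSegIic c)]
  rfl

theorem Ordinal.rank_toType_mk {o : Ordinal} (x : Set.Iio o) :
    rank (· < ·) (ToType.mk x) = x.1 := by
  rw [rank_eq_typein, ← ToType.mk_symm_apply_coe, RelIso.symm_apply_apply]

theorem Ordinal.rank_toType_lt {o : Ordinal} (x : o.ToType) : rank (· < ·) x < o := by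
  rw [rank_eq_typein]
  exact typein_lt_self x

section RankedSum

variable {T : Type u} [PartialOrder T] [WellFoundedLT T] {P : T → Type v}
  [∀ t, PartialOrder (P t)] [∀ t, WellFoundedLT (P t)]

theorem lift_primRank_le_rankedRank (a : Σ t, P t) :
    lift.{u} (primRank a) ≤ rankedRank a :=
  lift_rank_le_of_rel_imp_lt (fun y : P a.1 => rankedRank ⟨a.1, y⟩)
    (fun _ _ h => rank_lt_of_rel (Or.inl ⟨rfl, h⟩)) a.2

theorem rankedRank_le_primRank_add_rank (hT : ∀ t : T, rank (· < ·) t < ω) (a : Σ t, P t) :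
    rankedRank a ≤ lift.{u} (primRank a) + lift.{v} (rank (· < ·) a.1) := by
  refine (lift_id'.{u, v} (rankedRank a)).symm.trans_le
    (lift_rank_le_of_rel_imp_lt.{max u v, u} (r := RankedLT)
      (fun b => lift.{u} (primRank b) + lift.{v} (rank (· < ·) b.1)) ?_ a)
  rintro ⟨s, x⟩ ⟨t, y⟩ (⟨hst, hxy⟩ | ⟨hst, hxy⟩)
  · dsimp only at hst
    subst hst
    obtain ⟨n, hn⟩ := lt_omega0.mp (hT s)
    simp only [hn, lift_natCast]
    exact add_natCast_lt_add_natCast (lift_lt.mpr (rank_lt_of_rel hxy)) n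
  · exact (add_lt_add_right (lift_lt.mpr (rank_lt_of_rel hst)) _).trans_le
      (add_le_add_left (lift_le.mpr hxy) _)

theorem rankedRank_eq_omega0_add_one (hT : ∀ t : T, rank (· < ·) t < ω) {s t : T} (hst : s < t)
    (ht : rank (· < ·) t = 1) {x : P s} {y : P t} (hx : rank (· < ·) x = ω)
    (hy : rank (· < ·) y = ω) : rankedRank ⟨t, y⟩ = ω + 1 := by
  apply le_antisymm
  · simpa [primRank, hy, ht] using rankedRank_le_primRank_add_rank hT ⟨t, y⟩
  · have hω : ω ≤ rankedRank ⟨s, x⟩ := by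
      simpa [primRank, hx] using lift_primRank_le_rankedRank ⟨s, x⟩
    exact Order.add_one_le_of_lt
      (hω.trans_lt (rank_lt_of_rel (Or.inr ⟨hst, (hx.trans hy.symm).le⟩)))

end RankedSum

/-- Counterexample to Lemma 12 of Malicki–Rutkowski: `T = {0,1}`, `P_0 = P_1 = ω + 1`,
`a` the maximum of `P_1`. -/
theorem counterexample_lemma12 :
    (∃ (T : Type) (_ : PartialOrder T) (_ : WellFoundedLT T)
        (P : T → Type) (_ : ∀ t, PartialOrder (P t)) (_ : ∀ t, WellFoundedLT (P t))
        (a : Σ t, P t),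
        IsWellFounded.rank (α := T) (· < ·) a.1 + primRank a < rankedRank a) ∧
    (∀ a : Σ _ : Set.Iic (1 : Ordinal), Set.Iic (ω : Ordinal),
      a = ⟨⟨1, Set.self_mem_Iic⟩, ⟨ω, Set.self_mem_Iic⟩⟩ →
      rankedRank a = ω + 1 ∧
      IsWellFounded.rank (α := Set.Iic (1 : Ordinal)) (· < ·) a.1 + primRank a = ω ∧
      (ω : Ordinal.{1}) < ω + 1) := by
  constructor
  · refine ⟨(2 : Ordinal).ToType, inferInstance, inferInstance, fun _ => (ω + 1 : Ordinal).ToType,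
      fun _ => inferInstance, fun _ => inferInstance,
      ⟨ToType.mk ⟨1, Set.mem_Iio.mpr one_lt_two⟩, ToType.mk ⟨ω, Set.mem_Iio.mpr (lt_add_one ω)⟩⟩, ?_⟩
    rw [rankedRank_eq_omega0_add_one (s := ToType.mk ⟨0, Set.mem_Iio.mpr two_pos⟩)
      (x := ToType.mk ⟨ω, Set.mem_Iio.mpr (lt_add_one ω)⟩)
      (fun t => (rank_toType_lt t).trans (by simpa using natCast_lt_omega0 2))
      (ToType.mk.strictMono (Subtype.mk_lt_mk.mpr zero_lt_one)) (rank_toType_mk _)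
      (rank_toType_mk _) (rank_toType_mk _)]
    simp only [primRank, rank_toType_mk, one_add_omega0]
    exact lt_add_one ω
  · rintro a rfl
    refine ⟨rankedRank_eq_omega0_add_one (s := ⟨0, Set.mem_Iic.mpr zero_le_one⟩)
      (x := ⟨ω, Set.self_mem_Iic⟩)
      (fun t => by rw [rank_Iic]; exact (lift_le.mpr t.2).trans_lt (by simp [one_lt_omega0]))
      (Subtype.mk_lt_mk.mpr zero_lt_one) (by simp [rank_Iic]) (by simp [rank_Iic])
      (by simp [rank_Iic]), by simp [primRank, rank_Iic], lt_add_one ω⟩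
end

section
/- In the ranked sum of T = α + 1 with all components equal to β + 1 (β the least ordinal with α + β = β), for each t ≤ α the maximum element a_t of P_t satisfies rank_{RP}(a_t) = β + t. -/
/-!
Here the ranked order is just the strict product order on `Iic α × Iic β`, so the rank of `(t, x)`
is at most the natural sum `x ♯ t`. Minimality forces `β = α * ω`, an additively principal
ordinal, i.e. a power of `ω`; such ordinals are closed under `♯` (split off the last `ω`-block
by division), which gives `β ♯ t ≤ β + t` for `t ≤ α < β`. Conversely, `(t, β)` sits on top of
the chain `(t, x)` for `x < β` followed by the maxima `(s, β)` for `s < t`, of length `β + t`.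
-/

open Ordinal

namespace Ordinal

/-- The natural (Hessenberg) sum of ordinals. -/
noncomputable def nadd (a b : Ordinal.{u}) : Ordinal.{u} :=
  max (⨆ x : Set.Iio a, Order.succ (nadd x.1 b)) (⨆ x : Set.Iio b, Order.succ (nadd a x.1))
termination_by (a, b)
decreasing_by
  · exact Prod.Lex.left _ _ x.2
  · exact Prod.Lex.right _ x.2

infixl:65 " ♯ " => Ordinal.nadd

theorem nadd_le_iff {a b c : Ordinal.{u}} :
    a ♯ b ≤ c ↔ (∀ a' < a, a' ♯ b < c) ∧ ∀ b' < b, a ♯ b' < c := by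
  rw [nadd, max_le_iff, Ordinal.iSup_le_iff, Ordinal.iSup_le_iff]
  simp

theorem nadd_lt_nadd_right {b c : Ordinal.{u}} (h : b < c) (a : Ordinal.{u}) : b ♯ a < c ♯ a :=
  (nadd_le_iff.1 le_rfl).1 b h

theorem nadd_lt_nadd_left {b c : Ordinal.{u}} (h : b < c) (a : Ordinal.{u}) : a ♯ b < a ♯ c :=
  (nadd_le_iff.1 le_rfl).2 b h

theorem nadd_le_nadd_right {b c : Ordinal.{u}} (h : b ≤ c) (a : Ordinal.{u}) : b ♯ a ≤ c ♯ a :=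
  h.eq_or_lt.elim (fun h => h ▸ le_rfl) fun h => (nadd_lt_nadd_right h a).le

theorem nadd_comm (a b : Ordinal.{u}) : a ♯ b = b ♯ a := by
  induction a using WellFoundedLT.induction generalizing b with | _ a IHa =>
  induction b using WellFoundedLT.induction with | _ b IHb =>
  refine le_antisymm (nadd_le_iff.2 ⟨fun a' h => ?_, fun b' h => ?_⟩)
    (nadd_le_iff.2 ⟨fun b' h => ?_, fun a' h => ?_⟩)
  · rw [IHa a' h b]; exact nadd_lt_nadd_left h b
  · rw [IHb b' h]; exact nadd_lt_nadd_right h a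
  · rw [← IHb b' h]; exact nadd_lt_nadd_left h a
  · rw [← IHa a' h b]; exact nadd_lt_nadd_right h b

@[simp]
theorem nadd_zero (a : Ordinal.{u}) : a ♯ 0 = a := by
  induction a using WellFoundedLT.induction with | _ a IH =>
  refine le_antisymm (nadd_le_iff.2 ⟨fun a' h => (IH a' h).symm ▸ h, fun _ h => ?_⟩)
    (le_of_forall_lt fun c hc => IH c hc ▸ nadd_lt_nadd_right hc 0)
  exact (not_lt_zero h).elim

theorem natCast_nadd_natCast_le (m n : ℕ) : (m : Ordinal) ♯ n ≤ (m + n : ℕ) := by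
  induction m using Nat.strong_induction_on generalizing n with | _ m IHm =>
  induction n using Nat.strong_induction_on with | _ n IHn =>
  refine nadd_le_iff.2 ⟨fun a ha => ?_, fun b hb => ?_⟩
  · obtain ⟨k, rfl⟩ := lt_omega0.1 (ha.trans (natCast_lt_omega0 m))
    have hk : k < m := Nat.cast_lt.1 ha
    exact (IHm k hk n).trans_lt (Nat.cast_lt.2 (by omega))
  · obtain ⟨k, rfl⟩ := lt_omega0.1 (hb.trans (natCast_lt_omega0 n))
    have hk : k < n := Nat.cast_lt.1 hb
    exact (IHn k hk).trans_lt (Nat.cast_lt.2 (by omega))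

theorem isPrincipal_nadd_omega0 : IsPrincipal (· ♯ ·) ω := by
  intro a b ha hb
  obtain ⟨m, rfl⟩ := lt_omega0.1 ha
  obtain ⟨n, rfl⟩ := lt_omega0.1 hb
  exact (natCast_nadd_natCast_le m n).trans_lt (natCast_lt_omega0 _)

theorem mul_div_nadd_add_mod_nadd_lt {b : Ordinal.{u}} (hb : IsPrincipal (· ♯ ·) b) (hb0 : b ≠ 0)
    {x' x : Ordinal.{u}} (hx : x' < x) (w : Ordinal.{u}) {v : Ordinal.{u}} (hv : v < b) :
    b * (x' / b ♯ w) + (x' % b ♯ v) < b * (x / b ♯ w) + (x % b ♯ v) := by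
  rcases (div_le_left hx.le b).lt_or_eq with hq | hq
  · calc b * (x' / b ♯ w) + (x' % b ♯ v) < b * (x' / b ♯ w) + b :=
          add_lt_add_right (hb (mod_lt x' hb0) hv) _
      _ = b * Order.succ (x' / b ♯ w) := (mul_succ _ _).symm
      _ ≤ b * (x / b ♯ w) := mul_le_mul_right (Order.succ_le_of_lt (nadd_lt_nadd_right hq w)) b
      _ ≤ _ := le_self_add
  · have hr : x' % b < x % b := by
      rw [← div_add_mod x' b, ← div_add_mod x b, hq] at hx
      exact (add_lt_add_iff_left _).1 hx
    rw [hq]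
    exact add_lt_add_right (nadd_lt_nadd_right hr v) _

theorem nadd_le_mul_div_nadd_add_mod_nadd {b : Ordinal.{u}} (hb : IsPrincipal (· ♯ ·) b)
    (hb0 : b ≠ 0) (x y : Ordinal.{u}) :
    x ♯ y ≤ b * (x / b ♯ y / b) + (x % b ♯ y % b) := by
  induction x using WellFoundedLT.induction generalizing y with | _ x IHx =>
  induction y using WellFoundedLT.induction with | _ y IHy =>
  refine nadd_le_iff.2 ⟨fun x' hx' => ?_, fun y' hy' => ?_⟩
  · exact (IHx x' hx' y).trans_lt
      (mul_div_nadd_add_mod_nadd_lt hb hb0 hx' _ (mod_lt y hb0))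
  · have := mul_div_nadd_add_mod_nadd_lt hb hb0 hy' (x / b) (mod_lt x hb0)
    rw [nadd_comm (y' / b), nadd_comm (y' % b), nadd_comm (y / b), nadd_comm (y % b)] at this
    exact (IHy y' hy').trans_lt this

theorem isPrincipal_nadd_omega0_opow (e : Ordinal.{u}) : IsPrincipal (· ♯ ·) (ω ^ e) := by
  induction e using WellFoundedLT.induction with | _ e IH =>
  rcases zero_or_succ_or_isSuccLimit e with rfl | ⟨d, rfl⟩ | he
  · rw [opow_zero, isPrincipal_one_iff, nadd_zero]
  · intro a b ha hb
    have hu0 : ω ^ d ≠ 0 := opow_ne_zero d omega0_ne_zero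
    have hu := IH d (Order.lt_succ d)
    rw [opow_succ, lt_mul_iff_div_lt hu0] at ha hb
    rw [opow_succ]
    calc a ♯ b ≤ ω ^ d * (a / ω ^ d ♯ b / ω ^ d) + (a % ω ^ d ♯ b % ω ^ d) :=
          nadd_le_mul_div_nadd_add_mod_nadd hu hu0 a b
      _ < ω ^ d * (a / ω ^ d ♯ b / ω ^ d) + ω ^ d :=
          add_lt_add_right (hu (mod_lt a hu0) (mod_lt b hu0)) _
      _ = ω ^ d * Order.succ (a / ω ^ d ♯ b / ω ^ d) := (mul_succ _ _).symm
      _ ≤ ω ^ d * ω :=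
          mul_le_mul_right (Order.succ_le_of_lt (isPrincipal_nadd_omega0 ha hb)) _
  · intro a b ha hb
    obtain ⟨d₁, hd₁, ha⟩ := (lt_opow_of_isSuccLimit omega0_ne_zero he).1 ha
    obtain ⟨d₂, hd₂, hb⟩ := (lt_opow_of_isSuccLimit omega0_ne_zero he).1 hb
    have hle : ∀ {d}, d ≤ max d₁ d₂ → ω ^ d ≤ ω ^ max d₁ d₂ := opow_le_opow_right omega0_pos
    exact (IH _ (max_lt hd₁ hd₂) (ha.trans_le (hle (le_max_left _ _)))
      (hb.trans_le (hle (le_max_right _ _)))).trans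
      ((opow_lt_opow_iff_right one_lt_omega0).2 (max_lt hd₁ hd₂))

theorem isPrincipal_nadd_of_isPrincipal_add {o : Ordinal.{u}} (ho : IsPrincipal (· + ·) o) :
    IsPrincipal (· ♯ ·) o := by
  obtain rfl | ⟨e, rfl⟩ := isPrincipal_add_iff_zero_or_omega0_opow.1 ho
  exacts [isPrincipal_zero, isPrincipal_nadd_omega0_opow e]

theorem nadd_le_add_of_isPrincipal_nadd {β t : Ordinal.{u}} (hβ : IsPrincipal (· ♯ ·) β)
    (ht : t < β) : β ♯ t ≤ β + t := by
  induction t using WellFoundedLT.induction with | _ t IH =>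
  refine nadd_le_iff.2 ⟨fun b hb => (hβ hb ht).trans_le le_self_add, fun t' ht' => ?_⟩
  exact (IH t' ht' (ht'.trans ht)).trans_lt (add_lt_add_right ht' β)

end Ordinal

namespace IsWellFounded

variable {α : Type u} {r : α → α → Prop} [IsWellFounded α r]

theorem rank_le_of_relHom (f : r →r (· < · : Ordinal.{u} → Ordinal.{u} → Prop)) (a : α) :
    rank r a ≤ f a := by
  induction a using IsWellFounded.induction r with | _ a IH =>
  rw [rank_eq]
  exact Ordinal.iSup_le fun b => Order.succ_le_of_lt ((IH b b.2).trans_lt (f.map_rel b.2))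

theorem le_rank_of_forall_lt {o : Ordinal.{u}} {a : α}
    (h : ∀ o' < o, ∃ b, r b a ∧ o' ≤ rank r b) : o ≤ rank r a :=
  le_of_forall_lt fun o' ho' =>
    let ⟨_, hba, hb⟩ := h o' ho'
    hb.trans_lt (rank_lt_of_rel hba)

end IsWellFounded

section ConstantRankedSum

variable {α β : Ordinal.{0}}

theorem rankedRank_le_lift_nadd (a : Σ _ : Set.Iic α, Set.Iic β) :
    rankedRank a ≤ Ordinal.lift.{1} (a.2.1 ♯ a.1.1) := by
  let f : RankedLT (T := Set.Iic α) (P := fun _ => Set.Iic β) →r (· < ·) :=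
    ⟨fun a => Ordinal.lift.{1} (a.2.1 ♯ a.1.1), by
      rintro ⟨s, z⟩ ⟨t, x⟩ (⟨hst, hzx⟩ | ⟨hst, hzx⟩)
      · dsimp at hst
        subst hst
        exact Ordinal.lift_lt.2 (nadd_lt_nadd_right hzx _)
      · have hzx : z ≤ x := WellFoundedLT.rank_strictMono.le_iff_le.1 hzx
        exact Ordinal.lift_lt.2 ((nadd_le_nadd_right hzx _).trans_lt (nadd_lt_nadd_left hst _))⟩
  exact IsWellFounded.rank_le_of_relHom f a

theorem lift_le_rankedRank (t : Set.Iic α) (x : Set.Iic β) :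
    Ordinal.lift.{1} x.1 ≤ rankedRank (⟨t, x⟩ : Σ _ : Set.Iic α, Set.Iic β) := by
  induction x using WellFoundedLT.induction with | _ x IH =>
  refine IsWellFounded.le_rank_of_forall_lt fun o ho => ?_
  obtain ⟨y, hy, rfl⟩ := Ordinal.lt_lift_iff.1 ho
  let y' : Set.Iic β := ⟨y, hy.le.trans x.2⟩
  have hyx : y' < x := hy
  exact ⟨⟨t, y'⟩, Or.inl ⟨rfl, hyx⟩, IH y' hyx⟩

theorem lift_add_le_rankedRank (t : Set.Iic α) :
    Ordinal.lift.{1} (β + t.1)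
      ≤ rankedRank (⟨t, ⟨β, Set.self_mem_Iic⟩⟩ : Σ _ : Set.Iic α, Set.Iic β) := by
  induction t using WellFoundedLT.induction with | _ t IH =>
  refine IsWellFounded.le_rank_of_forall_lt fun o ho => ?_
  obtain ⟨c, hc, rfl⟩ := Ordinal.lt_lift_iff.1 ho
  rcases lt_or_ge c β with hcβ | hβc
  · let c' : Set.Iic β := ⟨c, hcβ.le⟩
    have hc' : c' < ⟨β, Set.self_mem_Iic⟩ := hcβ
    exact ⟨⟨t, c'⟩, Or.inl ⟨rfl, hc'⟩, lift_le_rankedRank t c'⟩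
  · obtain ⟨s, rfl⟩ := le_iff_exists_add.1 hβc
    have hst : s < t.1 := (add_lt_add_iff_left β).1 hc
    let s' : Set.Iic α := ⟨s, hst.le.trans t.2⟩
    exact ⟨⟨s', ⟨β, Set.self_mem_Iic⟩⟩, Or.inr ⟨hst, le_rfl⟩, IH s' hst⟩

end ConstantRankedSum

theorem rankedRank_of_maxima (α β : Ordinal.{0})
    (hβ : α + β = β) (hmin : ∀ γ : Ordinal.{0}, α + γ = γ → β ≤ γ) :
    ∀ t : Set.Iic α,
      rankedRank (⟨t, ⟨β, Set.self_mem_Iic⟩⟩ : Σ _ : Set.Iic α, Set.Iic β)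
        = Ordinal.lift.{1, 0} (β + t.1) := by
  rintro ⟨t, ht⟩
  have hβω : β = α * ω := le_antisymm (hmin _ (add_eq_right_iff_mul_omega0_le.2 le_rfl))
    (add_eq_right_iff_mul_omega0_le.1 hβ)
  have hnadd : β ♯ t ≤ β + t := by
    rcases eq_zero_or_pos α with rfl | hα
    · obtain rfl : t = 0 := nonpos_iff_eq_zero.1 ht
      simp
    subst hβω
    exact nadd_le_add_of_isPrincipal_nadd (isPrincipal_nadd_of_isPrincipal_add
        (isPrincipal_add_mul_of_isPrincipal_add α one_lt_omega0.ne' isPrincipal_add_omega0))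
      (ht.trans_lt (lt_mul_of_one_lt_right hα one_lt_omega0))
  exact le_antisymm ((rankedRank_le_lift_nadd _).trans (Ordinal.lift_le.2 hnadd))
    (lift_add_le_rankedRank ⟨t, ht⟩)
end
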